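/- Let C_strip be the strip framework in ℝ². There exists an infinitesimal flex u : {1,2,3} × ℤ → ℝ² of C_strip with u(1,k) = 0 for all k ∈ ℤ which is nonzero and unbounded: sup_{(κ,k)} ‖u(κ,k)‖ = ∞. -/

import Mathlib

open scoped BigOperators

/-- Positions of the three motif vertices of the strip framework. -/
def stripP : Fin 3 → Fin 2 → ℝ := ![![0, 0], ![0, 4], ![1, 3]]

/-- First endpoints (motif vertex labels, with translation index `0`) of the five motif
edges of the strip framework. -/
def stripκ : Fin 5 → Fin 3 := ![0, 1, 0, 0, 2]

/-- Second endpoints (motif vertex labels) of the five motif edges. -/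
def stripτ : Fin 5 → Fin 3 := ![1, 2, 2, 0, 1]

/-- Second endpoint translation indices of the five motif edges. -/
def stripl : Fin 5 → ℤ := ![0, 0, 0, 1, 1]

/-- The framework vertices `q(κ, k) = p(κ) + (4k, 0)` of the strip framework. -/
def stripQ (κ₀ : Fin 3) (k : ℤ) : Fin 2 → ℝ :=
  fun i => stripP κ₀ i + if i = 0 then 4 * (k : ℝ) else 0

/-- The edge vectors of the five motif edges of the strip framework. -/
def stripV (e : Fin 5) : Fin 2 → ℝ :=
  fun i => stripQ (stripκ e) 0 i - stripQ (stripτ e) (stripl e) i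

/-- An infinitesimal flex of the strip framework: for every translate of every motif edge
the Euclidean inner product of the edge vector with the difference of the endpoint
velocities vanishes. -/
def IsStripFlex (u : Fin 3 × ℤ → EuclideanSpace ℝ (Fin 2)) : Prop :=
  ∀ (e : Fin 5) (m : ℤ),
    ∑ i, stripV e i * (u (stripκ e, 0 + m) i - u (stripτ e, stripl e + m) i) = 0

/-- the geometric coefficient -/
noncomputable def stripC (k : ℤ) : ℝ := (2/3 : ℝ) ^ k

lemma stripC_pos (k : ℤ) : 0 < stripC k := by
  exact zpow_pos (by norm_num) k

lemma stripC_succ (m : ℤ) : stripC (1 + m) = (2/3) * stripC m := by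
  unfold stripC
  rw [zpow_add₀ (by norm_num : (2/3:ℝ) ≠ 0), zpow_one]

/-- the flex -/
noncomputable def stripU : Fin 3 × ℤ → EuclideanSpace ℝ (Fin 2)
  | (0, _) => 0
  | (1, k) => WithLp.toLp 2 (fun i : Fin 2 => if i = 0 then 4 * stripC k else 0)
  | (2, k) => WithLp.toLp 2 (fun i : Fin 2 => if i = 0 then 3 * stripC k else - stripC k)

/-- the strip framework admits a nonzero unbounded infinitesimal flex which
fixes all the supporting vertices. -/
theorem strip_exists_unbounded_flex_fixing_base :
    ∃ u : Fin 3 × ℤ → EuclideanSpace ℝ (Fin 2),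
      IsStripFlex u ∧ (∀ k : ℤ, u (0, k) = 0) ∧ u ≠ 0 ∧
        ∀ M : ℝ, ∃ x : Fin 3 × ℤ, M < ‖u x‖ := by
  refine ⟨stripU, ?_, ?_, ?_, ?_⟩
  · intro e m
    fin_cases e <;>
      simp only [stripV, stripQ, stripP, stripκ, stripτ, stripl, stripU,
        Fin.sum_univ_two, zero_add] <;>
      norm_num [stripC_succ, Matrix.cons_val_two, Matrix.vecHead, Matrix.vecTail] <;> ring
  · intro k; simp [stripU]
  · intro h
    have h1 : stripU (1, 0) 0 = 0 := by rw [h]; rfl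
    simp [stripU, stripC] at h1
  · intro M
    obtain ⟨n, hn⟩ := pow_unbounded_of_one_lt (M / 4) (by norm_num : (1:ℝ) < 3/2)
    refine ⟨(1, -(n:ℤ)), ?_⟩
    have hc : stripC (-(n:ℤ)) = (3/2:ℝ) ^ n := by
      unfold stripC
      rw [zpow_neg, ← inv_zpow, zpow_natCast]
      norm_num
    have h0 : stripU (1, -(n:ℤ)) 0 = 4 * stripC (-(n:ℤ)) := rfl
    have h1 : stripU (1, -(n:ℤ)) 1 = 0 := rfl
    have hnorm : ‖stripU (1, -(n:ℤ))‖ = 4 * stripC (-(n:ℤ))  := by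
      rw [EuclideanSpace.norm_eq, Fin.sum_univ_two, h0, h1]
      rw [show ‖(4 * stripC (-(n:ℤ)))‖ ^ 2 + ‖(0:ℝ)‖ ^ 2 = (4 * stripC (-(n:ℤ)))^2 by
        simp [Real.norm_eq_abs, sq_abs, abs_of_pos (stripC_pos _)]]
      exact Real.sqrt_sq (by linarith [stripC_pos (-(n:ℤ))])
    rw [hnorm, hc]
    linarith [hn, (by positivity : (0:ℝ) < (3/2:ℝ)^n)]
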